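/- For a safety objective, if (B, C) is a block-switching pair, then at least one state in the frontier Fr(B, C) has positive responsibility; in particular Player Sat wins the game G[C ∪ Fr(B, C)], and hence there exist Fr' ⊆ Fr(B, C) and s ∈ Fr(B, C) such that Sat loses G[C ∪ Fr'] but wins G[C ∪ Fr' ∪ {s}]. -/
import Mathlib


/-- Player Sat (with positional strategies, controlling the states in `C`)
wins the game on arena `tr` with objective `Ω` from state `init`. -/
def Wins {S : Type*} (tr : S → S → Prop) (C : Set S) (Ω : (ℕ → S) → Prop) (init : S) : Prop :=
  ∃ σ : S → S, (∀ s, tr s (σ s)) ∧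
    ∀ π : ℕ → S, π 0 = init →
      (∀ i, tr (π i) (π (i + 1)) ∧ (π i ∈ C → π (i + 1) = σ (π i))) → Ω π

/-- Player Sat's winning region when controlling the states in `C`. -/
def WinSet {S : Type*} (tr : S → S → Prop) (C : Set S) (Ω : (ℕ → S) → Prop) : Set S :=
  {s | Wins tr C Ω s}

/-- `Δ = Win(G[C ∪ B]) \ Win(G[C])`. -/
def Delta {S : Type*} (tr : S → S → Prop) (Ω : (ℕ → S) → Prop) (C B : Set S) : Set S :=
  WinSet tr (C ∪ B) Ω \ WinSet tr C Ω

/-- The frontier `Fr(B, C)`: states of `B ∩ Δ` with a transition leaving `Δ`. -/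
def Frontier {S : Type*} (tr : S → S → Prop) (Ω : (ℕ → S) → Prop) (C B : Set S) : Set S :=
  {s | s ∈ Delta tr Ω C B ∩ B ∧ ∃ t, tr s t ∧ t ∉ Delta tr Ω C B}

def SafetyObj {S : Type*} (F : Set S) : (ℕ → S) → Prop := fun π => ∀ i, π i ∉ F

def ReachObj {S : Type*} (F : Set S) : (ℕ → S) → Prop := fun π => ∃ i, π i ∈ F

section AuxLemmas

variable {S : Type*} {tr : S → S → Prop}

lemma wins_mono {C₁ C₂ : Set S} (h : C₁ ⊆ C₂) {Ω : (ℕ → S) → Prop} {init : S}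
    (hw : Wins tr C₁ Ω init) : Wins tr C₂ Ω init := by
  obtain ⟨σ, hσ, hp⟩ := hw
  exact ⟨σ, hσ, fun π h0 hc => hp π h0 (fun i => ⟨(hc i).1, fun hi => (hc i).2 (h hi)⟩)⟩

lemma wins_step {C' F : Set S} {s : S} {σ : S → S}
    (hp : ∀ π : ℕ → S, π 0 = s →
      (∀ i, tr (π i) (π (i + 1)) ∧ (π i ∈ C' → π (i + 1) = σ (π i))) → SafetyObj F π)
    {t : S} (htr : tr s t) (ht : s ∈ C' → t = σ s) :
    ∀ π : ℕ → S, π 0 = t →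
      (∀ i, tr (π i) (π (i + 1)) ∧ (π i ∈ C' → π (i + 1) = σ (π i))) → SafetyObj F π := by
  intro ρ h0 hc i
  have key := hp (fun n => Nat.rec s (fun n _ => ρ n) n) rfl ?_ (i + 1)
  · exact key
  · intro j
    cases j with
    | zero =>
      refine ⟨?_, ?_⟩
      · show tr s (ρ 0); rw [h0]; exact htr
      · intro hs; show ρ 0 = σ s; rw [h0]; exact ht hs
    | succ k => exact hc k

lemma exists_succ_wins {C' F : Set S} {s : S}
    (hw : Wins tr C' (SafetyObj F) s) :
    ∃ t, tr s t ∧ Wins tr C' (SafetyObj F) t := by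
  obtain ⟨σ, hσ, hp⟩ := hw
  exact ⟨σ s, hσ s, σ, hσ, wins_step hp (hσ s) (fun _ => rfl)⟩

lemma succ_wins_of_not_ctrl {C' F : Set S} {s t : S}
    (hw : Wins tr C' (SafetyObj F) s) (hs : s ∉ C') (htr : tr s t) :
    Wins tr C' (SafetyObj F) t := by
  obtain ⟨σ, hσ, hp⟩ := hw
  exact ⟨σ, hσ, wins_step hp htr (fun h => absurd h hs)⟩

lemma not_mem_F_of_wins (htotal : ∀ s, ∃ t, tr s t) {C' F : Set S} {s : S}
    (hw : Wins tr C' (SafetyObj F) s) : s ∉ F := by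
  classical
  obtain ⟨σ, hσ, hp⟩ := hw
  set f : S → S := fun x => if x ∈ C' then σ x else (htotal x).choose with hf
  have hfstep : ∀ x, tr x (f x) ∧ (x ∈ C' → f x = σ x) := by
    intro x
    by_cases hx : x ∈ C'
    · constructor
      · show tr x (f x); simp only [hf, if_pos hx]; exact hσ x
      · intro _; simp only [hf, if_pos hx]
    · constructor
      · show tr x (f x); simp only [hf, if_neg hx]; exact (htotal x).choose_spec
      · intro h; exact absurd h hx
  have hplay := hp (fun n => f^[n] s) (by simp) ?_
  · have := hplay 0
    simpa using this
  · intro i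
    have h1 : f^[i + 1] s = f (f^[i] s) := Function.iterate_succ_apply' f i s
    refine ⟨?_, ?_⟩
    · show tr (f^[i] s) (f^[i + 1] s); rw [h1]; exact (hfstep _).1
    · intro hmem; show f^[i + 1] s = σ (f^[i] s); rw [h1]; exact (hfstep _).2 hmem

lemma invariant_wins {C' F Inv : Set S} (σ : S → S) (hσ : ∀ s, tr s (σ s))
    (hF : ∀ s ∈ Inv, s ∉ F)
    (h1 : ∀ s ∈ Inv, s ∈ C' → σ s ∈ Inv)
    (h2 : ∀ s ∈ Inv, s ∉ C' → ∀ t, tr s t → t ∈ Inv)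
    {init : S} (hinit : init ∈ Inv) : Wins tr C' (SafetyObj F) init := by
  refine ⟨σ, hσ, fun π h0 hc i => ?_⟩
  have hinv : ∀ j, π j ∈ Inv := by
    intro j
    induction j with
    | zero => rw [h0]; exact hinit
    | succ k ih =>
      by_cases hk : π k ∈ C'
      · rw [(hc k).2 hk]; exact h1 _ ih hk
      · exact h2 _ ih hk _ (hc k).1
  exact hF _ (hinv i)

end AuxLemmas

/-- For safety objectives and a block-switching pair `(B, C)`, Player Sat wins when
controlling `C ∪ Fr(B, C)`, and hence some state of the frontier has positive
responsibility: there are `Fr' ⊆ Fr(B, C)` and `s ∈ Fr(B, C)` with Sat losing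
`G[C ∪ Fr']` but winning `G[C ∪ Fr' ∪ {s}]`. -/
theorem frontier_useful_safety {S : Type*} [Fintype S]
    (tr : S → S → Prop) (htotal : ∀ s, ∃ t, tr s t)
    (F : Set S) (init : S)
    (hreach : ∃ (π : ℕ → S) (n : ℕ), π 0 = init ∧ (∀ i, tr (π i) (π (i + 1))) ∧ π n ∈ F)
    (B C : Set S)
    (hwin : Wins tr (C ∪ B) (SafetyObj F) init)
    (hlose : ¬Wins tr C (SafetyObj F) init) :
    Wins tr (C ∪ Frontier tr (SafetyObj F) C B) (SafetyObj F) init ∧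
    ∃ Fr' ⊆ Frontier tr (SafetyObj F) C B, ∃ s ∈ Frontier tr (SafetyObj F) C B,
      ¬Wins tr (C ∪ Fr') (SafetyObj F) init ∧
      Wins tr (C ∪ Fr' ∪ {s}) (SafetyObj F) init := by
  classical
  set Ω := SafetyObj F with hΩ
  set W := WinSet tr (C ∪ B) Ω with hWdef
  set Fr := Frontier tr Ω C B with hFrdef
  have hWmem : ∀ s, s ∈ W ↔ Wins tr (C ∪ B) Ω s := fun s => Iff.rfl
  -- uniform strategy picking a winning successor when possible
  have hσdef : ∀ s : S, ∃ t, tr s t ∧ ((∃ u, tr s u ∧ u ∈ W) → t ∈ W) := by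
    intro s
    by_cases h : ∃ u, tr s u ∧ u ∈ W
    · exact ⟨h.choose, h.choose_spec.1, fun _ => h.choose_spec.2⟩
    · exact ⟨(htotal s).choose, (htotal s).choose_spec, fun hh => absurd hh h⟩
  choose σ hσ1 hσ2 using hσdef
  have hFrB : Fr ⊆ B := fun s hs => hs.1.2
  have hpart1 : Wins tr (C ∪ Fr) Ω init := by
    refine invariant_wins (Inv := W) σ hσ1 ?_ ?_ ?_ hwin
    · exact fun s hs => not_mem_F_of_wins htotal hs
    · intro s hs hsC
      refine hσ2 s ?_
      obtain ⟨t, htr, htw⟩ := exists_succ_wins (hs : Wins tr (C ∪ B) Ω s)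
      exact ⟨t, htr, htw⟩
    · intro s hs hsC t htr
      have hsnC : s ∉ C := fun h => hsC (Or.inl h)
      have hsnFr : s ∉ Fr := fun h => hsC (Or.inr h)
      by_cases hWC : Wins tr C Ω s
      · have := succ_wins_of_not_ctrl hWC hsnC htr
        exact wins_mono Set.subset_union_left this
      · have hΔ : s ∈ Delta tr Ω C B := ⟨hs, hWC⟩
        by_cases hB : s ∈ B
        · by_contra htW
          have htΔ : t ∉ Delta tr Ω C B := fun h => htW h.1
          exact hsnFr ⟨⟨hΔ, hB⟩, t, htr, htΔ⟩
        · have hsnCB : s ∉ C ∪ B := fun h => h.elim hsnC hB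
          exact succ_wins_of_not_ctrl (hs : Wins tr (C ∪ B) Ω s) hsnCB htr
  refine ⟨hpart1, ?_⟩
  -- take a winning subset of Fr of minimal cardinality
  set P : ℕ → Prop := fun n => ∃ T, T ⊆ Fr ∧ Wins tr (C ∪ T) Ω init ∧ T.ncard = n with hP
  have hPne : ∃ n, P n := ⟨Fr.ncard, Fr, subset_rfl, hpart1, rfl⟩
  obtain ⟨T, hTFr, hTwin, hTcard⟩ : P (sInf {n | P n}) := Nat.sInf_mem hPne
  have hTne : T.Nonempty := by
    rcases T.eq_empty_or_nonempty with h | h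
    · rw [h, Set.union_empty] at hTwin; exact absurd hTwin hlose
    · exact h
  obtain ⟨s, hsT⟩ := hTne
  refine ⟨T \ {s}, Set.diff_subset.trans hTFr, s, hTFr hsT, ?_, ?_⟩
  · intro hw
    have hlt : (T \ {s}).ncard < T.ncard :=
      Set.ncard_diff_singleton_lt_of_mem hsT (Set.toFinite T)
    have hmem : P ((T \ {s}).ncard) := ⟨T \ {s}, Set.diff_subset.trans hTFr, hw, rfl⟩
    have hle : sInf {n | P n} ≤ (T \ {s}).ncard := Nat.sInf_le hmem
    omega
  · have heq : C ∪ (T \ {s}) ∪ {s} = C ∪ T := by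
      rw [Set.union_assoc, Set.diff_union_self,
        Set.union_eq_self_of_subset_right (Set.singleton_subset_iff.mpr hsT)]
    rw [heq]; exact hTwin
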